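/- Worst-case fidelity of a unital CPTP qubit channel (Section V): Let {K_j}_{j∈J} be a finite Kraus family of 2×2 complex matrices with ∑_j K_jᴴ K_j = 1 and ∑_j K_j K_jᴴ = 1, defining the unital, trace-preserving channel Φ(ρ) = ∑_j K_j ρ K_jᴴ. Define the real symmetric 3×3 matrix N by N_{ab} := (1/4) · Re( tr(σ_a Φ(σ_b)) + tr(σ_b Φ(σ_a)) ) for a, b ∈ {x, y, z}, and let t_min be the smallest eigenvalue of N. Then (1/2)·(1 + t_min) is the minimum of ⟨ψ, Φ(ψψᴴ) ψ⟩ over all unit vectors ψ ∈ ℂ²: it is a lower bound for all unit ψ, and it is attained by some unit vector ψ. Equivalently, the worst-case fidelity loss of Φ is η_Φ = (1 − t_min)/2. -/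

import Mathlib

/-!
A pure state has the Bloch form `ψψᴴ = (1 + ∑ₐ rₐ σₐ) / 2` with `r` a unit vector of `ℝ³`, and
`⟨ψ, Φ(ψψᴴ) ψ⟩ = tr(ψψᴴ Φ(ψψᴴ))`. Since the Pauli matrices are traceless and orthogonal for the
trace form, unitality and trace preservation reduce this to `(1 + rᵀ R r) / 2`, where
`R_ab = ½ Re tr(σₐ Φ(σ_b))`. The matrix `N` is the symmetric part of `R`, so the fidelity is
`(1 + rᵀ N r) / 2`, and its minimum over the unit sphere is `(1 + t_min) / 2` by the Rayleigh
principle; it is attained because every unit vector of `ℝ³` is the Bloch vector of some `ψ`.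
-/

open Matrix

/-- The Pauli matrices `σ_x, σ_y, σ_z`. -/
def pauli : Fin 3 → Matrix (Fin 2) (Fin 2) ℂ :=
  ![!![0, 1; 1, 0], !![0, -Complex.I; Complex.I, 0], !![1, 0; 0, -1]]

section Kraus

variable {n J : Type*} [Fintype n] [Fintype J]

def krausMap (K : J → Matrix n n ℂ) : Matrix n n ℂ →ₗ[ℂ] Matrix n n ℂ where
  toFun ρ := ∑ j, K j * ρ * (K j)ᴴ
  map_add' ρ σ := by simp only [Matrix.mul_add, Matrix.add_mul, Finset.sum_add_distrib]
  map_smul' c ρ := by simp [Finset.smul_sum]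

theorem krausMap_apply (K : J → Matrix n n ℂ) (ρ : Matrix n n ℂ) :
    krausMap K ρ = ∑ j, K j * ρ * (K j)ᴴ := rfl

theorem trace_krausMap [DecidableEq n] {K : J → Matrix n n ℂ} (hK : ∑ j, (K j)ᴴ * K j = 1)
    (ρ : Matrix n n ℂ) : trace (krausMap K ρ) = trace ρ := by
  simp only [krausMap_apply, trace_sum, trace_mul_cycle (K _) ρ]
  rw [← trace_sum, ← Finset.sum_mul, hK, Matrix.one_mul]

theorem krausMap_one [DecidableEq n] {K : J → Matrix n n ℂ} (hK : ∑ j, K j * (K j)ᴴ = 1) :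
    krausMap K 1 = 1 := by
  simpa [krausMap_apply] using hK

end Kraus

theorem dotProduct_mulVec_eq_trace_mul_vecMulVec {n R : Type*} [Fintype n] [CommSemiring R]
    (A : Matrix n n R) (u v : n → R) : u ⬝ᵥ (A *ᵥ v) = trace (A * vecMulVec v u) := by
  rw [mul_vecMulVec, trace_vecMulVec, dotProduct_comm]

theorem dotProduct_mulVec_add_transpose {n R : Type*} [Fintype n] [CommSemiring R]
    (A : Matrix n n R) (v : n → R) : v ⬝ᵥ ((A + Aᵀ) *ᵥ v) = 2 * (v ⬝ᵥ (A *ᵥ v)) := by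
  rw [add_mulVec, dotProduct_add, mulVec_transpose, dotProduct_comm v (v ᵥ* A),
    ← dotProduct_mulVec, two_mul]

theorem Matrix.IsHermitian.ofReal_re_star_dotProduct_mulVec {n : Type*} [Fintype n]
    {A : Matrix n n ℂ} (hA : A.IsHermitian) (ψ : n → ℂ) :
    ((star ψ ⬝ᵥ (A *ᵥ ψ)).re : ℂ) = star ψ ⬝ᵥ (A *ᵥ ψ) := by
  refine Complex.conj_eq_iff_re.mp ?_
  change star _ = _
  rw [← star_dotProduct_star, star_star, star_mulVec, hA.eq, ← dotProduct_mulVec]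

theorem exists_dotProduct_self_eq_one_of_mulVec_eq_smul {n : Type*} [Fintype n]
    {A : Matrix n n ℝ} {t : ℝ} {v : n → ℝ} (hv : v ≠ 0) (h : A *ᵥ v = t • v) :
    ∃ u, u ⬝ᵥ u = 1 ∧ u ⬝ᵥ (A *ᵥ u) = t := by
  have hpos : 0 < v ⬝ᵥ v := by simpa using dotProduct_star_self_pos_iff.mpr hv
  set c := (Real.sqrt (v ⬝ᵥ v))⁻¹
  have hc : c ^ 2 * (v ⬝ᵥ v) = 1 := by
    rw [inv_pow, Real.sq_sqrt hpos.le, inv_mul_cancel₀ hpos.ne']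
  refine ⟨c • v, ?_, ?_⟩
  · simp only [dotProduct_smul, smul_dotProduct, smul_eq_mul]
    linear_combination hc
  · simp only [mulVec_smul, h, dotProduct_smul, smul_dotProduct, smul_eq_mul]
    linear_combination t * hc

theorem Matrix.IsHermitian.le_dotProduct_mulVec {n : Type*} [Fintype n]
    {A : Matrix n n ℝ} (hA : A.IsHermitian) {t : ℝ}
    (ht : t ∈ lowerBounds {μ | ∃ v, v ≠ 0 ∧ A *ᵥ v = μ • v}) (v : n → ℝ) :
    t * (v ⬝ᵥ v) ≤ v ⬝ᵥ (A *ᵥ v) := by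
  classical
  have hB : (A - t • 1).IsHermitian := hA.sub (by simp [IsHermitian])
  have hpsd : (A - t • 1).PosSemidef := by
    refine hB.posSemidef_iff_eigenvalues_nonneg.mpr fun i => ?_
    have heig := hB.mulVec_eigenvectorBasis i
    rw [sub_mulVec, smul_mulVec, one_mulVec, sub_eq_iff_eq_add, ← add_smul] at heig
    have hne : ⇑(hB.eigenvectorBasis i) ≠ 0 := by
      simpa using hB.eigenvectorBasis.orthonormal.ne_zero i
    simpa using ht ⟨_, hne, heig⟩
  have hquad := hpsd.dotProduct_mulVec_nonneg v
  simp only [star_trivial, sub_mulVec, smul_mulVec, one_mulVec, dotProduct_sub, dotProduct_smul,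
    smul_eq_mul] at hquad
  linarith

theorem trace_pauli (a : Fin 3) : trace (pauli a) = 0 := by
  fin_cases a <;> simp [pauli, trace]

theorem isHermitian_pauli (a : Fin 3) : (pauli a).IsHermitian := by
  fin_cases a <;> ext i j <;> fin_cases i <;> fin_cases j <;> simp [pauli]

theorem eq_pauli_expansion (A : Matrix (Fin 2) (Fin 2) ℂ) :
    A = (1 / 2 : ℂ) • (trace A • 1 + ∑ a, trace (pauli a * A) • pauli a) := by
  ext i j
  fin_cases i <;> fin_cases j <;>
    simp [pauli, trace, Fin.sum_univ_three, mul_apply] <;> ring_nf <;> simp [Complex.I_sq] <;> ring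

theorem trace_mul_eq_pauli_sum (A B : Matrix (Fin 2) (Fin 2) ℂ) :
    trace (A * B) =
      1 / 2 * (trace A * trace B + ∑ a, trace (pauli a * A) * trace (pauli a * B)) := by
  conv_lhs => rw [eq_pauli_expansion A]
  simp [Matrix.add_mul, Matrix.sum_mul, trace_sum, mul_add]

def blochVector (ψ : Fin 2 → ℂ) : Fin 3 → ℝ := fun a => (star ψ ⬝ᵥ (pauli a *ᵥ ψ)).re

theorem trace_pauli_mul_vecMulVec (ψ : Fin 2 → ℂ) (a : Fin 3) :
    trace (pauli a * vecMulVec ψ (star ψ)) = blochVector ψ a := by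
  rw [← dotProduct_mulVec_eq_trace_mul_vecMulVec, blochVector,
    (isHermitian_pauli a).ofReal_re_star_dotProduct_mulVec]

theorem vecMulVec_star_eq_bloch {ψ : Fin 2 → ℂ} (hψ : star ψ ⬝ᵥ ψ = 1) :
    vecMulVec ψ (star ψ) = (1 / 2 : ℂ) • (1 + ∑ a, (blochVector ψ a : ℂ) • pauli a) := by
  conv_lhs => rw [eq_pauli_expansion (vecMulVec ψ (star ψ))]
  rw [trace_vecMulVec, dotProduct_comm, hψ, one_smul]
  simp only [trace_pauli_mul_vecMulVec]

theorem blochVector_dotProduct_self {ψ : Fin 2 → ℂ} (hψ : star ψ ⬝ᵥ ψ = 1) :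
    blochVector ψ ⬝ᵥ blochVector ψ = 1 := by
  have h := trace_mul_eq_pauli_sum (vecMulVec ψ (star ψ)) (vecMulVec ψ (star ψ))
  have hψ' : ψ ⬝ᵥ star ψ = 1 := by rw [dotProduct_comm, hψ]
  simp only [vecMulVec_mul_vecMulVec, hψ, hψ', one_smul, trace_vecMulVec,
    trace_pauli_mul_vecMulVec] at h
  have h' : ((blochVector ψ ⬝ᵥ blochVector ψ : ℝ) : ℂ) = 1 := by
    simp only [dotProduct, Complex.ofReal_sum, Complex.ofReal_mul]
    linear_combination -2 * h
  exact_mod_cast h'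

theorem blochVector_ofReal_cons (a : ℝ) (β : ℂ) :
    blochVector ![(a : ℂ), β] = ![2 * a * β.re, 2 * a * β.im, a ^ 2 - Complex.normSq β] := by
  ext i
  fin_cases i <;> simp [blochVector, pauli, dotProduct, Complex.normSq_apply] <;> ring

theorem star_dotProduct_self_ofReal_cons (a : ℝ) (β : ℂ) :
    star ![(a : ℂ), β] ⬝ᵥ ![(a : ℂ), β] = ((a ^ 2 + Complex.normSq β : ℝ) : ℂ) := by
  simp [dotProduct, sq, Complex.normSq_eq_conj_mul_self]

theorem exists_blochVector_eq {v : Fin 3 → ℝ} (hv : v ⬝ᵥ v = 1) :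
    ∃ ψ : Fin 2 → ℂ, star ψ ⬝ᵥ ψ = 1 ∧ blochVector ψ = v := by
  obtain ⟨x, y, z, rfl⟩ : ∃ x y z : ℝ, v = ![x, y, z] :=
    ⟨v 0, v 1, v 2, by ext i; fin_cases i <;> rfl⟩
  have hv' : x ^ 2 + y ^ 2 + z ^ 2 = 1 := by
    simpa [dotProduct, Fin.sum_univ_three, sq] using hv
  by_cases hz : z = -1
  · have hx : x = 0 := by nlinarith
    have hy : y = 0 := by nlinarith
    refine ⟨![((0 : ℝ) : ℂ), 1], ?_, ?_⟩
    · rw [star_dotProduct_self_ofReal_cons]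
      norm_num
    · rw [blochVector_ofReal_cons, hx, hy, hz]
      norm_num
  · -- away from the south pole, `ψ ∝ (1 + z, x + i y)`
    have hpos : 0 < 1 + z := by
      have : -1 ≤ z := by nlinarith
      exact lt_of_le_of_ne (by linarith) fun h => hz (by linarith)
    set s := Real.sqrt (2 * (1 + z))
    have hs : s ^ 2 = 2 * (1 + z) := Real.sq_sqrt (by positivity)
    have hs0 : s ≠ 0 := by positivity
    refine ⟨![(((1 + z) / s : ℝ) : ℂ), ⟨x / s, y / s⟩], ?_, ?_⟩
    · rw [star_dotProduct_self_ofReal_cons, Complex.normSq_mk, Complex.ofReal_eq_one]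
      field_simp
      linear_combination hv' - hs
    · rw [blochVector_ofReal_cons, Complex.normSq_mk]
      simp only [vecCons_inj]
      refine ⟨?_, ?_, ?_, trivial⟩ <;> field_simp
      · linear_combination -x * hs
      · linear_combination -y * hs
      · linear_combination -hv' - z * hs

section Channel

/-- The lower-right `3 × 3` block of the Pauli transfer matrix of `Φ`. -/
noncomputable def pauliTransferMatrix
    (Φ : Matrix (Fin 2) (Fin 2) ℂ →ₗ[ℂ] Matrix (Fin 2) (Fin 2) ℂ) : Matrix (Fin 3) (Fin 3) ℝ :=
  of fun a b => 1 / 2 * (trace (pauli a * Φ (pauli b))).re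

def squaredFidelity (Φ : Matrix (Fin 2) (Fin 2) ℂ →ₗ[ℂ] Matrix (Fin 2) (Fin 2) ℂ)
    (ψ : Fin 2 → ℂ) : ℝ :=
  (star ψ ⬝ᵥ (Φ (vecMulVec ψ (star ψ)) *ᵥ ψ)).re

variable {Φ : Matrix (Fin 2) (Fin 2) ℂ →ₗ[ℂ] Matrix (Fin 2) (Fin 2) ℂ} {ψ : Fin 2 → ℂ}

theorem re_trace_pauli_mul_map_vecMulVec (hU : Φ 1 = 1) (hψ : star ψ ⬝ᵥ ψ = 1) (a : Fin 3) :
    (trace (pauli a * Φ (vecMulVec ψ (star ψ)))).re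
      = (pauliTransferMatrix Φ *ᵥ blochVector ψ) a := by
  rw [vecMulVec_star_eq_bloch hψ]
  simp [hU, Matrix.mul_add, trace_sum, trace_pauli, mulVec, dotProduct,
    pauliTransferMatrix, Complex.re_sum, Finset.mul_sum, mul_comm (blochVector ψ _), mul_assoc]

theorem squaredFidelity_eq (hTP : ∀ ρ, trace (Φ ρ) = trace ρ) (hU : Φ 1 = 1)
    (hψ : star ψ ⬝ᵥ ψ = 1) :
    squaredFidelity Φ ψ
      = 1 / 2 * (1 + blochVector ψ ⬝ᵥ (pauliTransferMatrix Φ *ᵥ blochVector ψ)) := by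
  have hρ : trace (vecMulVec ψ (star ψ)) = 1 := by rw [trace_vecMulVec, dotProduct_comm, hψ]
  rw [squaredFidelity, dotProduct_mulVec_eq_trace_mul_vecMulVec, trace_mul_eq_pauli_sum, hTP,
    hρ]
  simp [trace_pauli_mul_vecMulVec, Complex.re_sum, re_trace_pauli_mul_map_vecMulVec hU hψ,
    dotProduct, mul_comm]

end Channel

/-- Worst-case fidelity of a unital CPTP qubit channel (Section V): for a unital,
trace-preserving qubit channel `Φ(ρ) = ∑_j K_j ρ K_jᴴ`, with the real symmetric matrix
`N_{ab} = (1/4)·Re(tr(σ_a Φ(σ_b)) + tr(σ_b Φ(σ_a)))` and `t_min` its smallest eigenvalue,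
the minimum of the squared fidelity `⟨ψ, Φ(ψψᴴ) ψ⟩` over unit vectors `ψ ∈ ℂ²` is exactly
`(1/2)·(1 + t_min)`; equivalently, the worst-case fidelity loss is `(1 − t_min)/2`. -/
theorem worst_case_fidelity_unital_qubit
    {J : Type*} [Fintype J]
    (K : J → Matrix (Fin 2) (Fin 2) ℂ)
    (hKTP : ∑ j, (K j)ᴴ * K j = 1)
    (hKU : ∑ j, K j * (K j)ᴴ = 1)
    (N : Matrix (Fin 3) (Fin 3) ℝ) (tmin : ℝ)
    (hN : ∀ a b, N a b = (1 / 4) *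
      ((Matrix.trace (pauli a * ∑ j, K j * pauli b * (K j)ᴴ)).re
        + (Matrix.trace (pauli b * ∑ j, K j * pauli a * (K j)ᴴ)).re))
    (htmin : IsLeast {t : ℝ | ∃ v : Fin 3 → ℝ, v ≠ 0 ∧ N *ᵥ v = t • v} tmin) :
    IsLeast
      {r : ℝ | ∃ ψ : Fin 2 → ℂ, star ψ ⬝ᵥ ψ = 1 ∧
        r = (star ψ ⬝ᵥ ((∑ j, K j * vecMulVec ψ (star ψ) * (K j)ᴴ) *ᵥ ψ)).re}
      ((1 / 2) * (1 + tmin)) := by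
  set R := pauliTransferMatrix (krausMap K)
  have hNR : N = (1 / 2 : ℝ) • (R + Rᵀ) := by
    ext a b
    simp only [hN, R, pauliTransferMatrix, krausMap_apply, Matrix.smul_apply, Matrix.add_apply,
      of_apply, transpose_apply, smul_eq_mul]
    ring
  have hN_herm : N.IsHermitian := by
    ext a b
    simp only [conjTranspose_apply, star_trivial, hN]
    ring
  have hfid : ∀ ψ, star ψ ⬝ᵥ ψ = 1 →
      squaredFidelity (krausMap K) ψ = 1 / 2 * (1 + blochVector ψ ⬝ᵥ (N *ᵥ blochVector ψ)) := by
    intro ψ hψ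
    rw [squaredFidelity_eq (trace_krausMap hKTP) (krausMap_one hKU) hψ, hNR, smul_mulVec,
      dotProduct_smul, dotProduct_mulVec_add_transpose, smul_eq_mul]
    ring
  refine ⟨?_, ?_⟩
  · obtain ⟨v, hv0, hv⟩ := htmin.1
    obtain ⟨u, hu1, hu⟩ := exists_dotProduct_self_eq_one_of_mulVec_eq_smul hv0 hv
    obtain ⟨ψ, hψ, rfl⟩ := exists_blochVector_eq hu1
    exact ⟨ψ, hψ, by rw [← hu, ← hfid ψ hψ]; rfl⟩
  · rintro _ ⟨ψ, hψ, rfl⟩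
    have hray := hN_herm.le_dotProduct_mulVec htmin.2 (blochVector ψ)
    rw [blochVector_dotProduct_self hψ, mul_one] at hray
    change _ ≤ squaredFidelity (krausMap K) ψ
    rw [hfid ψ hψ]
    linarith
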